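/- Let A be maximal monotone on H. If there exists (u, u*) such that (x*, x) is a subgradient of the Fitzpatrick function H_A at (u, u*) and ⟨u − x, u* − x*⟩ = 0, then (x, x*) ∈ A. -/

import Mathlib

/-!
The Fitzpatrick function `φ` of a monotone set `A` satisfies `φ ≤ ⟪·, ·⟫` on `A`, and
`⟪·, ·⟫ ≤ φ` everywhere once `A` is maximal monotone. Evaluating the subgradient inequality
at `(a, a*) ∈ A` therefore gives `⟪u, u*⟫ + ⟪x*, a - u⟫ + ⟪x, a* - u*⟫ ≤ ⟪a, a*⟫`, which
rearranges to `⟪a - x, a* - x*⟫ ≥ ⟪u - x, u* - x*⟫ = 0`; maximality puts `(x, x*)` in `A`.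
-/

open scoped RealInnerProductSpace

section

variable {H : Type*} [NormedAddCommGroup H] [InnerProductSpace ℝ H]

noncomputable def fitzpatrick (A : Set (H × H)) (x xs : H) : EReal :=
  ⨆ p ∈ A, ((⟪p.1, xs⟫ + ⟪x, p.2⟫ - ⟪p.1, p.2⟫ : ℝ) : EReal)

lemma fitzpatrick_term_eq (p : H × H) (x xs : H) :
    ⟪p.1, xs⟫ + ⟪x, p.2⟫ - ⟪p.1, p.2⟫ = ⟪x, xs⟫ - ⟪x - p.1, xs - p.2⟫ := by
  simp only [inner_sub_left, inner_sub_right]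
  ring

lemma fitzpatrick_le_inner_of_mem {A : Set (H × H)}
    (hmono : ∀ p ∈ A, ∀ q ∈ A, (0 : ℝ) ≤ ⟪p.1 - q.1, p.2 - q.2⟫) {z zs : H} (hz : (z, zs) ∈ A) :
    fitzpatrick A z zs ≤ (⟪z, zs⟫ : ℝ) := by
  refine iSup₂_le fun p hp => EReal.coe_le_coe_iff.mpr ?_
  rw [fitzpatrick_term_eq]
  linarith [hmono _ hz p hp]

lemma inner_le_fitzpatrick {A : Set (H × H)}
    (hmax : ∀ x xs : H, (∀ u ∈ A, (0 : ℝ) ≤ ⟪x - u.1, xs - u.2⟫) → (x, xs) ∈ A) (x xs : H) :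
    ((⟪x, xs⟫ : ℝ) : EReal) ≤ fitzpatrick A x xs := by
  by_contra! hlt
  have hterm_lt : ∀ p ∈ A, ⟪p.1, xs⟫ + ⟪x, p.2⟫ - ⟪p.1, p.2⟫ < ⟪x, xs⟫ := fun p hp =>
    EReal.coe_lt_coe_iff.mp ((le_iSup₂_of_le p hp le_rfl).trans_lt hlt)
  have hmem : (x, xs) ∈ A := hmax x xs fun p hp => by
    linarith [hterm_lt p hp, fitzpatrick_term_eq p x xs]
  simpa [fitzpatrick_term_eq] using hterm_lt _ hmem

lemma mem_of_forall_inner_add_le {A : Set (H × H)}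
    (hmax : ∀ x xs : H, (∀ u ∈ A, (0 : ℝ) ≤ ⟪x - u.1, xs - u.2⟫) → (x, xs) ∈ A)
    {u us x xs : H} (horth : ⟪u - x, us - xs⟫ = 0)
    (hle : ∀ a ∈ A, ⟪u, us⟫ + (⟪xs, a.1 - u⟫ + ⟪x, a.2 - us⟫) ≤ ⟪a.1, a.2⟫) :
    (x, xs) ∈ A := by
  refine hmax x xs fun a ha => ?_
  have h := hle a ha
  simp only [inner_sub_left, inner_sub_right] at h horth ⊢
  linarith [real_inner_comm xs a.1, real_inner_comm xs u, real_inner_comm x us]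

end

/-- If `(x*, x)` is a subgradient of the Fitzpatrick function of a maximal monotone
set `A` at some point `(u, u*)` with `⟨u - x, u* - x*⟩ = 0`, then `(x, x*) ∈ A`. -/
theorem mem_of_subgradient_fitzpatrick
    {H : Type*} [NormedAddCommGroup H] [InnerProductSpace ℝ H]
    (A : Set (H × H))
    (hmono : ∀ p ∈ A, ∀ q ∈ A, (0 : ℝ) ≤ inner ℝ (p.1 - q.1) (p.2 - q.2))
    (hmax : ∀ x xs : H, (∀ u ∈ A, (0 : ℝ) ≤ inner ℝ (x - u.1) (xs - u.2)) → (x, xs) ∈ A)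
    (u us x xs : H)
    (hfin : ∃ c : ℝ, (⨆ p ∈ A, (((inner ℝ p.1 us + inner ℝ u p.2 - inner ℝ p.1 p.2 : ℝ)) : EReal))
      = (c : EReal))
    (hsub : ∀ z zs : H,
      (⨆ p ∈ A, (((inner ℝ p.1 us + inner ℝ u p.2 - inner ℝ p.1 p.2 : ℝ)) : EReal))
          + (((inner ℝ xs (z - u) + inner ℝ x (zs - us) : ℝ)) : EReal)
        ≤ ⨆ p ∈ A, (((inner ℝ p.1 zs + inner ℝ z p.2 - inner ℝ p.1 p.2 : ℝ)) : EReal))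
    (horth : (inner ℝ (u - x) (us - xs) : ℝ) = 0) :
    (x, xs) ∈ A := by
  obtain ⟨c, hc⟩ : ∃ c : ℝ, fitzpatrick A u us = c := hfin
  have hsub : ∀ z zs, fitzpatrick A u us + ((⟪xs, z - u⟫ + ⟪x, zs - us⟫ : ℝ) : EReal)
      ≤ fitzpatrick A z zs := hsub
  have hc_ge : ⟪u, us⟫ ≤ c := EReal.coe_le_coe_iff.mp (hc ▸ inner_le_fitzpatrick hmax u us)
  refine mem_of_forall_inner_add_le hmax horth fun a ha => ?_
  have h := (hsub a.1 a.2).trans (fitzpatrick_le_inner_of_mem hmono ha)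
  rw [hc, ← EReal.coe_add, EReal.coe_le_coe_iff] at h
  linarith
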